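/- arXiv:1304.6999 — 2 statements merged into one kernel-verified Lean document; each statement's English description precedes it below -/
import Mathlib

section
/- Let T > 0 and p ∈ [0, 1/2). There exists a constant C > 0, independent of N, such that for every positive integer N with h := T/N < 1, Σ_{m≥1} |δ^N(N-1, m)| ≤ C h^{p+1/2}, where δ^N(N-1, m) := λ_m^{-p} [ ((1+λ_m h)^{-2} - e^{-2 λ_m h}) s_m + h (1+λ_m h)^{-2} - (1 - e^{-2 λ_m h})/(2 λ_m) ] and s_m := (1/(2 λ_m + λ_m² h)) (1 - (1+λ_m h)^{-2(N-1)}). -/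
/-!
With `x = λ h`, both `(1 + x)⁻²` and `e^{-2x}` lie in `[max 0 (1 - 2x), 1]`, and the second
moment satisfies `0 ≤ s ≤ 1 / (2λ)`; hence each of the two pieces of `λ^p δ` is at most
`min h (1 / (2λ))`, and `|δ^N(N-1, m)| ≤ 2 m^{-2p} min h m^{-2}` because `λ_m ≥ m²`.
Splitting the sum at `m ≈ h^{-1/2}`, the head is at most `h ∑_{m ≤ h^{-1/2}} m^{-2p} ≲ h^{p+1/2}`
(this is where `p < 1/2` enters) and the tail at most `h^p ∑_{m > h^{-1/2}} m^{-2} ≲ h^{p+1/2}`.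
-/

noncomputable def lam (m : ℕ) : ℝ := (Real.pi * m) ^ 2 / 2

open Real Finset

/-- The second moment `E|X_n|²` of the implicit Euler scheme with step `h` for
`dX = -l X dt + dW`, `X_0 = 0`, after `n` steps. -/
noncomputable def eulerSecondMoment (l h : ℝ) (n : ℕ) : ℝ :=
  (1 / (2 * l + l ^ 2 * h)) * (1 - ((1 + l * h) ^ (2 * n))⁻¹)

/-- `λ^p δ^N(N-1, m)` for `l = λ_m`, `h = T / N` and `n = N - 1`. -/
noncomputable def weakErrorLastStep (l h : ℝ) (n : ℕ) : ℝ :=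
  (((1 + l * h) ^ 2)⁻¹ - exp (-2 * l * h)) * eulerSecondMoment l h n +
    h * ((1 + l * h) ^ 2)⁻¹ - (1 - exp (-2 * l * h)) / (2 * l)

lemma eulerSecondMoment_nonneg {l h : ℝ} (hl : 0 < l) (hh : 0 ≤ h) (n : ℕ) :
    0 ≤ eulerSecondMoment l h n := by
  have : ((1 + l * h) ^ (2 * n))⁻¹ ≤ 1 := inv_le_one_of_one_le₀ (one_le_pow₀ (by nlinarith))
  unfold eulerSecondMoment
  exact mul_nonneg (by positivity) (by linarith)

lemma eulerSecondMoment_le {l h : ℝ} (hl : 0 < l) (hh : 0 ≤ h) (n : ℕ) :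
    eulerSecondMoment l h n ≤ (2 * l)⁻¹ := by
  have hQ : 0 ≤ ((1 + l * h) ^ (2 * n))⁻¹ := by positivity
  calc eulerSecondMoment l h n ≤ (1 / (2 * l + l ^ 2 * h)) * 1 := by
        unfold eulerSecondMoment; gcongr; linarith
    _ ≤ (2 * l)⁻¹ := by
        rw [mul_one, one_div]
        exact inv_anti₀ (by positivity) (by nlinarith)

lemma one_sub_exp_neg_two_mul_le (x : ℝ) : 1 - exp (-2 * x) ≤ min 1 (2 * x) :=
  le_min (by linarith [exp_pos (-2 * x)]) (by linarith [add_one_le_exp (-2 * x)])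

lemma two_mul_mul_inv_one_add_sq_le {x : ℝ} (hx : 0 ≤ x) :
    2 * x * ((1 + x) ^ 2)⁻¹ ≤ min 1 (2 * x) := by
  have hI : ((1 + x) ^ 2)⁻¹ ≤ 1 := inv_le_one_of_one_le₀ (by nlinarith)
  refine le_min ?_ (by nlinarith)
  rw [← div_eq_mul_inv, div_le_one (by positivity)]
  nlinarith [sq_nonneg (1 - x)]

lemma abs_inv_one_add_sq_sub_exp_le {x : ℝ} (hx : 0 ≤ x) :
    |((1 + x) ^ 2)⁻¹ - exp (-2 * x)| ≤ min 1 (2 * x) := by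
  have hI1 : ((1 + x) ^ 2)⁻¹ ≤ 1 := inv_le_one_of_one_le₀ (by nlinarith)
  have hI2 : 1 - 2 * x ≤ ((1 + x) ^ 2)⁻¹ := by
    rw [← one_div, le_div_iff₀ (by positivity)]
    nlinarith [mul_nonneg (mul_nonneg hx hx) hx]
  have hE1 : exp (-2 * x) ≤ 1 := exp_le_one_iff.mpr (by linarith)
  have hE2 : 1 - 2 * x ≤ exp (-2 * x) := by linarith [add_one_le_exp (-2 * x)]
  have hI0 : 0 < ((1 + x) ^ 2)⁻¹ := by positivity
  have hE0 := exp_pos (-2 * x)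
  exact abs_sub_le_iff.mpr ⟨le_min (by linarith) (by linarith), le_min (by linarith) (by linarith)⟩

lemma abs_weakErrorLastStep_le {l h : ℝ} (hl : 0 < l) (hh : 0 ≤ h) (n : ℕ) :
    |weakErrorLastStep l h n| ≤ 2 * min h l⁻¹ := by
  set μ := min 1 (2 * (l * h))
  have hx : 0 ≤ l * h := by positivity
  have hexp : exp (-2 * l * h) = exp (-2 * (l * h)) := by ring_nf
  have hs0 := eulerSecondMoment_nonneg hl hh n
  have hs1 := eulerSecondMoment_le hl hh n
  have hl2 : 0 < (2 * l)⁻¹ := by positivity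
  have hA :
      |(((1 + l * h) ^ 2)⁻¹ - exp (-2 * l * h)) * eulerSecondMoment l h n| ≤ μ * (2 * l)⁻¹ := by
    rw [abs_mul, abs_of_nonneg hs0, hexp]
    exact mul_le_mul (abs_inv_one_add_sq_sub_exp_le hx) hs1 hs0 (by positivity)
  have hB : |h * ((1 + l * h) ^ 2)⁻¹ - (1 - exp (-2 * l * h)) / (2 * l)| ≤ μ * (2 * l)⁻¹ := by
    have hhI : h * ((1 + l * h) ^ 2)⁻¹ = 2 * (l * h) * ((1 + l * h) ^ 2)⁻¹ * (2 * l)⁻¹ := by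
      field_simp
    rw [hhI, div_eq_mul_inv, hexp]
    have hE := one_sub_exp_neg_two_mul_le (l * h)
    apply abs_sub_le_of_nonneg_of_le (by positivity)
      (mul_le_mul_of_nonneg_right (two_mul_mul_inv_one_add_sq_le hx) hl2.le)
      (mul_nonneg (by linarith [exp_le_one_iff.mpr (by linarith : -2 * (l * h) ≤ 0)]) hl2.le)
      (mul_le_mul_of_nonneg_right hE hl2.le)
  have hμ : μ * (2 * l)⁻¹ ≤ min h l⁻¹ := by
    have hμh : 2 * (l * h) * (2 * l)⁻¹ = h := by field_simp
    rw [min_mul_of_nonneg _ _ hl2.le, hμh, one_mul, min_comm]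
    exact min_le_min_left _ (inv_anti₀ hl (by linarith))
  unfold weakErrorLastStep
  calc _ = |(((1 + l * h) ^ 2)⁻¹ - exp (-2 * l * h)) * eulerSecondMoment l h n +
        (h * ((1 + l * h) ^ 2)⁻¹ - (1 - exp (-2 * l * h)) / (2 * l))| := by ring_nf
    _ ≤ _ := (abs_add_le _ _).trans (by linarith)

lemma mul_rpow_sub_one_le_rpow_sub_rpow {c x : ℝ} (hc0 : 0 ≤ c) (hc1 : c ≤ 1) (hx : 0 ≤ x) :
    c * (x + 1) ^ (c - 1) ≤ (x + 1) ^ c - x ^ c := by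
  have hx1 : 0 < x + 1 := by linarith
  have hbern := rpow_one_add_le_one_add_mul_self (s := -(x + 1)⁻¹)
    (by linarith [inv_le_one_of_one_le₀ (by linarith : (1:ℝ) ≤ x + 1)]) hc0 hc1
  have hfrac : 1 + -(x + 1)⁻¹ = x / (x + 1) := by field_simp; ring
  rw [hfrac, div_rpow hx hx1.le, div_le_iff₀ (rpow_pos_of_pos hx1 c)] at hbern
  have hexpand :
      (1 + c * -(x + 1)⁻¹) * (x + 1) ^ c = (x + 1) ^ c - c * ((x + 1) ^ c / (x + 1)) := by
    ring
  rw [rpow_sub_one hx1.ne']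
  linarith

lemma sum_range_rpow_sub_one_le {c : ℝ} (hc0 : 0 < c) (hc1 : c ≤ 1) (M : ℕ) :
    ∑ k ∈ range M, ((k : ℝ) + 1) ^ (c - 1) ≤ (M : ℝ) ^ c / c := by
  induction M with
  | zero => simp [zero_rpow hc0.ne']
  | succ M ih =>
    rw [sum_range_succ, Nat.cast_succ, le_div_iff₀ hc0]
    rw [le_div_iff₀ hc0] at ih
    nlinarith [mul_rpow_sub_one_le_rpow_sub_rpow hc0.le hc1 (Nat.cast_nonneg (α := ℝ) M)]

lemma tsum_inv_sq_nat_add_le {M : ℕ} (hM : M ≠ 0) :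
    ∑' k : ℕ, (((k + M + 1 : ℕ) : ℝ) ^ 2)⁻¹ ≤ (M : ℝ)⁻¹ := by
  refine tsum_le_of_sum_range_le (fun _ => by positivity) fun n => ?_
  have hreindex : ∑ k ∈ range n, (((k + M + 1 : ℕ) : ℝ) ^ 2)⁻¹ =
      ∑ i ∈ Ioc M (n + M), ((i : ℝ) ^ 2)⁻¹ := by
    have hshift := sum_Ico_add' (fun i : ℕ => ((i : ℝ) ^ 2)⁻¹) 0 n (M + 1)
    rw [zero_add] at hshift
    rw [range_eq_Ico, ← Finset.Ico_add_one_add_one_eq_Ioc, add_assoc, ← hshift]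
    rfl
  rw [hreindex]
  exact (sum_Ioc_inv_sq_le_sub hM (by omega)).trans (sub_le_self _ (by positivity))

lemma summable_inv_sq_nat_add (M : ℕ) : Summable fun k : ℕ => (((k + M + 1 : ℕ) : ℝ) ^ 2)⁻¹ := by
  have := (summable_nat_add_iff (f := fun n : ℕ => ((n : ℝ) ^ 2)⁻¹) (M + 1)).mpr
    (summable_nat_pow_inv.mpr one_lt_two)
  simpa only [add_assoc] using this

lemma summable_rpow_neg_mul_min {a h : ℝ} (ha : 0 ≤ a) (hh : 0 ≤ h) :
    Summable fun k : ℕ => ((k : ℝ) + 1) ^ (-a) * min h (((k : ℝ) + 1) ^ 2)⁻¹ := by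
  refine (summable_inv_sq_nat_add 0).of_nonneg_of_le (fun k => by positivity) fun k => ?_
  push_cast
  calc ((k : ℝ) + 1) ^ (-a) * min h (((k : ℝ) + 1) ^ 2)⁻¹ ≤ 1 * (((k : ℝ) + 1) ^ 2)⁻¹ := by
        gcongr
        · exact rpow_le_one_of_one_le_of_nonpos (by linarith [k.cast_nonneg (α := ℝ)]) (by linarith)
        · exact min_le_right _ _
    _ = (((k : ℝ) + 0 + 1) ^ 2)⁻¹ := by ring

lemma tsum_rpow_neg_mul_min_le {a t : ℝ} (ha0 : 0 ≤ a) (ha1 : a < 1) (ht0 : 0 < t) (ht1 : t ≤ 1) :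
    ∑' k : ℕ, ((k : ℝ) + 1) ^ (-a) * min (t ^ 2) (((k : ℝ) + 1) ^ 2)⁻¹ ≤
      (2 / (1 - a) + 1) * t ^ (1 + a) := by
  set g : ℕ → ℝ := fun k => ((k : ℝ) + 1) ^ (-a) * min (t ^ 2) (((k : ℝ) + 1) ^ 2)⁻¹
  set M := ⌈t⁻¹⌉₊
  have hM0 : M ≠ 0 := (Nat.ceil_pos.mpr (inv_pos.mpr ht0)).ne'
  have hM_ge : t⁻¹ ≤ M := Nat.le_ceil _
  have hM_le : (M : ℝ) ≤ 2 * t⁻¹ := by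
    have := Nat.ceil_lt_add_one (inv_pos.mpr ht0).le
    linarith [one_le_inv_iff₀.mpr ⟨ht0, ht1⟩]
  have hMpos : (0 : ℝ) < M := (inv_pos.mpr ht0).trans_le hM_ge
  have head : ∑ k ∈ range M, g k ≤ 2 / (1 - a) * t ^ (1 + a) := by
    have hc : 0 < 1 - a := by linarith
    calc ∑ k ∈ range M, g k ≤ ∑ k ∈ range M, t ^ 2 * ((k : ℝ) + 1) ^ ((1 - a) - 1) :=
          sum_le_sum fun k _ => by
            simp only [g]
            rw [sub_sub_cancel_left, mul_comm (t ^ 2)]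
            gcongr
            exact min_le_left _ _
      _ = t ^ 2 * ∑ k ∈ range M, ((k : ℝ) + 1) ^ ((1 - a) - 1) := (mul_sum _ _ _).symm
      _ ≤ t ^ 2 * ((2 * t⁻¹) ^ (1 - a) / (1 - a)) := by
          gcongr
          exact (sum_range_rpow_sub_one_le hc (by linarith) M).trans (by gcongr)
      _ = 2 ^ (1 - a) / (1 - a) * t ^ (1 + a) := by
          have hpow : t ^ 2 * t ^ (-(1 - a)) = t ^ (1 + a) := by
            rw [← rpow_natCast, ← rpow_add ht0]
            ring_nf
          rw [mul_rpow zero_le_two (inv_nonneg.mpr ht0.le), inv_rpow ht0.le, ← rpow_neg ht0.le,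
            ← hpow]
          ring
      _ ≤ 2 / (1 - a) * t ^ (1 + a) := by
          gcongr
          exact rpow_le_self_of_one_le one_le_two (by linarith)
  have tail : ∑' k, g (k + M) ≤ t ^ (1 + a) := by
    calc ∑' k, g (k + M) ≤ ∑' k, (M : ℝ) ^ (-a) * (((k + M + 1 : ℕ) : ℝ) ^ 2)⁻¹ := by
          refine Summable.tsum_le_tsum (fun k => ?_)
            ((summable_nat_add_iff M).mpr (summable_rpow_neg_mul_min ha0 (sq_nonneg t)))
            ((summable_inv_sq_nat_add M).mul_left _)
          have hkM : (M : ℝ) ≤ (k + M : ℕ) + 1 := by push_cast; linarith [k.cast_nonneg (α := ℝ)]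
          simp only [g]
          rw [show (((k + M + 1 : ℕ) : ℝ)) = (k + M : ℕ) + 1 by push_cast; ring]
          exact mul_le_mul (rpow_le_rpow_of_nonpos hMpos hkM (by linarith)) (min_le_right _ _)
            (by positivity) (by positivity)
      _ = (M : ℝ) ^ (-a) * ∑' k, (((k + M + 1 : ℕ) : ℝ) ^ 2)⁻¹ := tsum_mul_left
      _ ≤ (M : ℝ) ^ (-a) * (M : ℝ)⁻¹ := by gcongr; exact tsum_inv_sq_nat_add_le hM0
      _ = (M : ℝ) ^ (-(1 + a)) := by
          rw [neg_add, rpow_add hMpos, rpow_neg_one, mul_comm]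
      _ ≤ t⁻¹ ^ (-(1 + a)) := rpow_le_rpow_of_nonpos (inv_pos.mpr ht0) hM_ge (by linarith)
      _ = t ^ (1 + a) := by rw [inv_rpow ht0.le, rpow_neg ht0.le, inv_inv]
  rw [← (summable_rpow_neg_mul_min ha0 (sq_nonneg t)).sum_add_tsum_nat_add M]
  linarith

lemma sq_le_lam (m : ℕ) : (m : ℝ) ^ 2 ≤ lam m := by
  have : 9 < π ^ 2 := by nlinarith [pi_gt_three]
  unfold lam
  nlinarith [sq_nonneg (m : ℝ)]

lemma abs_rpow_neg_mul_weakErrorLastStep_le {l h p x : ℝ} (hx : 0 < x) (hl : x ^ 2 ≤ l)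
    (hh : 0 ≤ h) (hp : 0 ≤ p) (n : ℕ) :
    |l ^ (-p) * weakErrorLastStep l h n| ≤ 2 * (x ^ (-(2 * p)) * min h (x ^ 2)⁻¹) := by
  have hl0 : 0 < l := (pow_pos hx 2).trans_le hl
  have hpow : (x ^ 2) ^ (-p) = x ^ (-(2 * p)) := by
    rw [← rpow_natCast, ← rpow_mul hx.le]
    ring_nf
  rw [abs_mul, abs_of_nonneg (rpow_nonneg hl0.le _), ← hpow, mul_left_comm]
  refine mul_le_mul (rpow_le_rpow_of_nonpos (by positivity) hl (by linarith))
    ((abs_weakErrorLastStep_le hl0 hh n).trans ?_) (abs_nonneg _) (by positivity)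
  gcongr

/-- Lemma 3.9: bound on the last term `δ^N(N-1,·)` of the weak-error
decomposition. -/
theorem stmt_8 (T : ℝ) (hT : 0 < T) (p : ℝ) (hp0 : 0 ≤ p) (hp : p < 1 / 2) :
    ∃ C : ℝ, 0 < C ∧ ∀ N : ℕ, 0 < N → T / N < 1 →
      ∑' m : ℕ,
        |lam (m + 1) ^ (-p) *
          ((((1 + lam (m + 1) * (T / N)) ^ 2)⁻¹ - Real.exp (-2 * lam (m + 1) * (T / N))) *
              ((1 / (2 * lam (m + 1) + lam (m + 1) ^ 2 * (T / N))) *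
                (1 - ((1 + lam (m + 1) * (T / N)) ^ (2 * (N - 1)))⁻¹)) +
            (T / N) * ((1 + lam (m + 1) * (T / N)) ^ 2)⁻¹ -
            (1 - Real.exp (-2 * lam (m + 1) * (T / N))) / (2 * lam (m + 1)))| ≤
        C * (T / N) ^ (p + 1 / 2) := by
  have hC : 0 < 2 / (1 - 2 * p) + 1 := by
    have : 0 < 1 - 2 * p := by linarith
    positivity
  refine ⟨2 * (2 / (1 - 2 * p) + 1), by positivity, fun N hN hTN => ?_⟩
  set h := T / N
  have hh : 0 < h := by positivity
  have hroot : √h ^ 2 = h := sq_sqrt hh.le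
  have hterm (m : ℕ) : |lam (m + 1) ^ (-p) * weakErrorLastStep (lam (m + 1)) h (N - 1)| ≤
      2 * (((m : ℝ) + 1) ^ (-(2 * p)) * min h (((m : ℝ) + 1) ^ 2)⁻¹) :=
    abs_rpow_neg_mul_weakErrorLastStep_le (by positivity)
      (by exact_mod_cast sq_le_lam (m + 1)) hh.le hp0 (N - 1)
  have hsum := summable_rpow_neg_mul_min (by linarith : 0 ≤ 2 * p) hh.le
  have htsum := tsum_rpow_neg_mul_min_le (a := 2 * p) (by linarith) (by linarith) (sqrt_pos.mpr hh)
    (sqrt_le_one.mpr hTN.le)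
  rw [hroot] at htsum
  show ∑' m : ℕ, |lam (m + 1) ^ (-p) * weakErrorLastStep (lam (m + 1)) h (N - 1)| ≤ _
  calc _ ≤ ∑' m : ℕ, 2 * (((m : ℝ) + 1) ^ (-(2 * p)) * min h (((m : ℝ) + 1) ^ 2)⁻¹) :=
        Summable.tsum_le_tsum hterm
          ((hsum.mul_left 2).of_nonneg_of_le (fun _ => abs_nonneg _) hterm) (hsum.mul_left 2)
    _ = 2 * ∑' m : ℕ, ((m : ℝ) + 1) ^ (-(2 * p)) * min h (((m : ℝ) + 1) ^ 2)⁻¹ := tsum_mul_left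
    _ ≤ 2 * ((2 / (1 - 2 * p) + 1) * √h ^ (1 + 2 * p)) := by gcongr
    _ = 2 * (2 / (1 - 2 * p) + 1) * h ^ (p + 1 / 2) := by
        rw [sqrt_eq_rpow, ← rpow_mul hh.le]
        ring_nf
end

section
/- Let T > 0 and p ∈ [0, 1/2). There exists a constant C > 0, independent of N, such that for every integer N ≥ 2 with h := T/N < 1, Σ_{m≥1} Σ_{k=0}^{N-2} ( λ_m^{1-p} h² + λ_m^{2-p} h³ ) e^{-2 λ_m h (N - k - 1)} ≤ C h^{p + 1/2}. -/
open Real Finset MeasureTheory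

theorem two_mul_sq_le_lam (m : ℕ) : 2 * (m : ℝ) ^ 2 ≤ lam m := by
  have : 4 ≤ π ^ 2 := by nlinarith [two_le_pi]
  rw [lam, mul_pow]
  nlinarith [sq_nonneg (m : ℝ)]

theorem lam_succ_pos (m : ℕ) : 0 < lam (m + 1) :=
  lt_of_lt_of_le (by positivity) (two_mul_sq_le_lam (m + 1))

theorem one_add_mul_exp_neg_le (a : ℝ) : (1 + a) * exp (-a) ≤ 2 * exp (-a / 2) :=
  calc (1 + a) * exp (-a) ≤ 2 * ((a / 2 + 1) * exp (-a)) := by nlinarith [exp_pos (-a)]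
    _ ≤ 2 * (exp (a / 2) * exp (-a)) := by gcongr; exact add_one_le_exp _
    _ = 2 * exp (-a / 2) := by rw [← exp_add]; ring_nf

theorem mul_sum_range_exp_neg_le {a : ℝ} (ha : 0 < a) (n : ℕ) :
    a * ∑ j ∈ range n, exp (-2 * a * (j + 1)) ≤ exp (-a) / 2 := by
  set u := exp (-a)
  have hu0 : 0 < u := exp_pos _
  have hu1 : u < 1 := exp_lt_one_iff.mpr (by linarith)
  have hterm (j : ℕ) : exp (-2 * a * (j + 1)) = u ^ 2 * (u ^ 2) ^ j := by
    rw [← pow_succ', ← pow_mul, ← exp_nat_mul]; push_cast; ring_nf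
  -- `a ≤ sinh a`, multiplied by `2 u = 2 exp (-a)`
  have hsinh : 2 * a * u ≤ 1 - u ^ 2 := by
    have := self_le_sinh_iff.mpr ha.le
    rw [sinh_eq] at this
    have hexp : exp a * u = 1 := by rw [← exp_add]; simp
    nlinarith
  have h1 : 0 < 1 - u ^ 2 := by nlinarith
  have hgeom : ∑ j ∈ range n, (u ^ 2) ^ j ≤ 1 / (1 - u ^ 2) := by
    have := geom_sum_Ico_le_of_lt_one (x := u ^ 2) (m := 0) (n := n) (by positivity)
      (by nlinarith)
    rwa [← range_eq_Ico, pow_zero] at this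
  simp_rw [hterm, ← mul_sum]
  calc a * (u ^ 2 * ∑ j ∈ range n, (u ^ 2) ^ j) ≤ a * (u ^ 2 * (1 / (1 - u ^ 2))) := by gcongr
    _ ≤ u / 2 := by
      rw [mul_one_div, ← mul_div_assoc, div_le_iff₀ h1]
      nlinarith

theorem sum_range_rpow_mul_exp_neg_mul_le {L h : ℝ} (hL : 0 < L) (hh : 0 < h) (p : ℝ) (N : ℕ) :
    ∑ k ∈ range (N - 1), (L ^ (1 - p) * h ^ 2 + L ^ (2 - p) * h ^ 3) *
        exp (-2 * L * h * ((N : ℝ) - k - 1)) ≤ h * L ^ (-p) * exp (-(L * h) / 2) := by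
  set a := L * h
  have ha : 0 < a := mul_pos hL hh
  have hcoef : L ^ (1 - p) * h ^ 2 + L ^ (2 - p) * h ^ 3 = h * L ^ (-p) * (1 + a) * a := by
    rw [show 1 - p = -p + 1 by ring, show 2 - p = -p + 2 by ring, rpow_add hL, rpow_add hL,
      rpow_one, rpow_two]
    ring
  have hreflect : ∑ k ∈ range (N - 1), exp (-2 * L * h * ((N : ℝ) - k - 1)) =
      ∑ j ∈ range (N - 1), exp (-2 * a * (j + 1)) := by
    rw [← sum_range_reflect]
    refine sum_congr rfl fun k hk => ?_
    rw [mem_range] at hk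
    rw [Nat.cast_sub (by omega), Nat.cast_sub (by omega), Nat.cast_sub (by omega)]
    congr 1
    ring
  rw [← mul_sum, hreflect, hcoef]
  calc h * L ^ (-p) * (1 + a) * a * ∑ j ∈ range (N - 1), exp (-2 * a * (j + 1))
      = h * L ^ (-p) * (1 + a) * (a * ∑ j ∈ range (N - 1), exp (-2 * a * (j + 1))) := by ring
    _ ≤ h * L ^ (-p) * (1 + a) * (exp (-a) / 2) := by
      gcongr; exact mul_sum_range_exp_neg_le ha _
    _ = h * L ^ (-p) * ((1 + a) * exp (-a)) / 2 := by ring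
    _ ≤ h * L ^ (-p) * (2 * exp (-a / 2)) / 2 := by
      gcongr h * L ^ (-p) * ?_ / 2; exact one_add_mul_exp_neg_le a
    _ = h * L ^ (-p) * exp (-a / 2) := by ring

theorem sum_range_lam_rpow_mul_exp_neg_mul_le {p h : ℝ} (hp : 0 ≤ p) (hh : 0 < h) (m N : ℕ) :
    ∑ k ∈ range (N - 1), (lam (m + 1) ^ (1 - p) * h ^ 2 + lam (m + 1) ^ (2 - p) * h ^ 3) *
        exp (-2 * lam (m + 1) * h * ((N : ℝ) - k - 1)) ≤
      h * (((m : ℝ) + 1) ^ (-(2 * p)) * exp (-h * ((m : ℝ) + 1) ^ 2)) := by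
  have hy : (0 : ℝ) < ((m : ℝ) + 1) ^ 2 := by positivity
  have hlam : 2 * ((m : ℝ) + 1) ^ 2 ≤ lam (m + 1) := by
    exact_mod_cast two_mul_sq_le_lam (m + 1)
  have hpow : ((m : ℝ) + 1) ^ (-(2 * p)) = (((m : ℝ) + 1) ^ 2) ^ (-p) := by
    rw [← rpow_two, ← rpow_mul (by positivity)]
    ring_nf
  refine (sum_range_rpow_mul_exp_neg_mul_le (lam_succ_pos m) hh p N).trans ?_
  rw [mul_assoc, hpow]
  gcongr h * ?_
  exact mul_le_mul (rpow_le_rpow_of_nonpos hy (by linarith) (by linarith))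
    (exp_le_exp.mpr (by nlinarith)) (exp_pos _).le (rpow_nonneg hy.le _)

theorem sum_range_rpow_mul_exp_neg_mul_sq_le_integral {s h : ℝ} (hs0 : 0 ≤ s) (hs1 : s < 1)
    (hh : 0 < h) (n : ℕ) :
    ∑ m ∈ range n, ((m : ℝ) + 1) ^ (-s) * exp (-h * ((m : ℝ) + 1) ^ 2) ≤
      1 + ∫ x in Set.Ioi (0 : ℝ), x ^ (-s) * exp (-h * x ^ 2) := by
  set g : ℝ → ℝ := fun x => x ^ (-s) * exp (-h * x ^ 2)
  set f : ℝ → ℝ := fun x => g (x + 1)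
  have hg : IntegrableOn g (Set.Ioi 0) := integrableOn_rpow_mul_exp_neg_mul_sq hh (by linarith)
  have hg_nonneg : 0 ≤ᵐ[volume.restrict (Set.Ioi 0)] g :=
    (ae_restrict_mem measurableSet_Ioi).mono fun x hx =>
      mul_nonneg (rpow_nonneg (le_of_lt hx) _) (exp_pos _).le
  change ∑ m ∈ range n, f m ≤ 1 + ∫ x in Set.Ioi (0 : ℝ), g x
  obtain _ | n := n
  · simp only [range_zero, sum_empty]
    linarith [integral_nonneg_of_ae hg_nonneg]
  have hhead : f (0 : ℕ) ≤ 1 := by simpa [f, g] using hh.le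
  -- on `[i, i + 1)` the integrand `g` dominates `f i = g (i + 1)`, since `g` is antitone
  have htail : ∑ i ∈ Ico 1 (n + 1), f i ≤ ∫ x in (1 : ℕ)..(n + 1 : ℕ), g x := by
    refine sum_Ico_le_integral_of_le (by omega) (fun i hi x hx => ?_)
      (hg.mono_set fun x hx => ?_)
    · have hi1 : (1 : ℝ) ≤ i := by exact_mod_cast hi.1
      have hx0 : 0 < x := by linarith [hx.1]
      have hxi : x ≤ i + 1 := by push_cast at hx; linarith [hx.2]
      exact mul_le_mul (rpow_le_rpow_of_nonpos hx0 hxi (by linarith))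
        (exp_le_exp.mpr (by nlinarith [pow_le_pow_left₀ hx0.le hxi 2])) (exp_pos _).le
        (rpow_nonneg hx0.le _)
    · simp only [Nat.cast_one, Set.mem_Ico] at hx
      exact lt_of_lt_of_le one_pos hx.1
  have hint : ∫ x in (1 : ℕ)..(n + 1 : ℕ), g x ≤ ∫ x in Set.Ioi (0 : ℝ), g x := by
    rw [intervalIntegral.integral_of_le (by norm_cast; omega)]
    refine setIntegral_mono_set hg hg_nonneg (LE.le.eventuallyLE fun x hx => ?_)
    simp only [Nat.cast_one, Set.mem_Ioc] at hx
    exact lt_trans one_pos hx.1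
  have hshift : ∑ k ∈ range n, f (k + 1 : ℕ) = ∑ i ∈ Ico 1 (n + 1), f i := by
    rw [sum_Ico_eq_sum_range, add_tsub_cancel_right]
    simp only [add_comm]
  rw [sum_range_succ', hshift]
  linarith

theorem integral_Ioi_rpow_mul_exp_neg_mul_sq {s h : ℝ} (hs : s < 1) (hh : 0 < h) :
    ∫ x in Set.Ioi (0 : ℝ), x ^ (-s) * exp (-h * x ^ 2) =
      h ^ ((s - 1) / 2) * (Gamma ((1 - s) / 2) / 2) := by
  simp_rw [← rpow_two]
  rw [integral_rpow_mul_exp_neg_mul_rpow two_pos (by linarith) hh]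
  ring_nf

/-- Double-series bound controlling the terms `I` and `J` of the weak-error
decomposition. -/
theorem stmt_16 (T : ℝ) (hT : 0 < T) (p : ℝ) (hp0 : 0 ≤ p) (hp : p < 1 / 2) :
    ∃ C : ℝ, 0 < C ∧ ∀ N : ℕ, 2 ≤ N → T / N < 1 →
      ∑' m : ℕ, ∑ k ∈ Finset.range (N - 1),
          (lam (m + 1) ^ (1 - p) * (T / N) ^ 2 + lam (m + 1) ^ (2 - p) * (T / N) ^ 3) *
            Real.exp (-2 * lam (m + 1) * (T / N) * ((N : ℝ) - k - 1)) ≤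
        C * (T / N) ^ (p + 1 / 2) := by
  have hΓ : 0 < Gamma (1 / 2 - p) := Gamma_pos_of_pos (by linarith)
  refine ⟨1 + Gamma (1 / 2 - p) / 2, by positivity, fun N hN hh1 => ?_⟩
  set h := T / N
  have hh : 0 < h := div_pos hT (by positivity)
  have hgauss (n : ℕ) :
      ∑ m ∈ range n, ((m : ℝ) + 1) ^ (-(2 * p)) * exp (-h * ((m : ℝ) + 1) ^ 2) ≤
        1 + h ^ (p - 1 / 2) * (Gamma (1 / 2 - p) / 2) := by
    have := sum_range_rpow_mul_exp_neg_mul_sq_le_integral (s := 2 * p) (by positivity)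
      (by linarith) hh n
    rwa [integral_Ioi_rpow_mul_exp_neg_mul_sq (by linarith) hh,
      show (2 * p - 1) / 2 = p - 1 / 2 by ring, show (1 - 2 * p) / 2 = 1 / 2 - p by ring] at this
  have hpow : h * h ^ (p - 1 / 2) = h ^ (p + 1 / 2) := by
    rw [← rpow_one_add' hh.le (by linarith)]; ring_nf
  have hh_le : h ≤ h ^ (p + 1 / 2) := by
    simpa using rpow_le_rpow_of_exponent_ge hh hh1.le (by linarith : p + 1 / 2 ≤ 1)
  refine Real.tsum_le_of_sum_range_le (fun m => sum_nonneg fun k _ => ?_) fun n => ?_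
  · have := lam_succ_pos m
    positivity
  calc _ ≤ ∑ m ∈ range n, h * (((m : ℝ) + 1) ^ (-(2 * p)) * exp (-h * ((m : ℝ) + 1) ^ 2)) :=
        sum_le_sum fun m _ => sum_range_lam_rpow_mul_exp_neg_mul_le hp0 hh m N
    _ ≤ h * (1 + h ^ (p - 1 / 2) * (Gamma (1 / 2 - p) / 2)) := by
        rw [← mul_sum]; gcongr; exact hgauss n
    _ ≤ _ := by nlinarith
end
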